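/- Let K be a commutative semiring, let n ≥ 1, τ ≥ 0, set ν = n + τ, and let m' ≥ 1 with μ = 2m'. Let U be the 2ν×2ν block-diagonal matrix [[P_2^{2n}, 0], [0, I_{2τ}]]. Then (U ⊗ I_{m'}) · (I_ν ⊗ P_2^{μ}) equals the block-diagonal matrix of order μν given by [[P_2^{nμ}, 0], [0, I_τ ⊗ P_2^{μ}]], where the top-left block has order nμ and the bottom-right block has order τμ. -/

import Mathlib

open Matrix

/-- The `mn`-point stride-`n` permutation, as a permutation of `Fin N` (where `N = m * n`):
it sends the index of `e_i^m ⊗ e_j^n` (i.e. `n*i + j`, zero-based) to the index of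
`e_j^n ⊗ e_i^m` (i.e. `m*j + i`). -/
def strideEquiv (N m n : ℕ) (h : N = m * n) : Fin N ≃ Fin N :=
  (finCongr h).trans <|
    finProdFinEquiv.symm.trans <|
      (Equiv.prodComm (Fin m) (Fin n)).trans <|
        finProdFinEquiv.trans (finCongr (by rw [h]; exact Nat.mul_comm n m))

/-- The `mn`-point stride-`n` permutation matrix `P_n^{mn}`: the `N × N` permutation matrix
(`N = m * n`) determined by `P_n^{mn} · (e_i^m ⊗ e_j^n) = e_j^n ⊗ e_i^m`. -/
def strideMat (K : Type*) [Semiring K] (N m n : ℕ) (h : N = m * n) :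
    Matrix (Fin N) (Fin N) K :=
  Matrix.of fun a b => if a = strideEquiv N m n h b then 1 else 0

/-- Kronecker (tensor) product of matrices, with row-major indexing by `Fin`:
the `(n*i + s, q*j + t)` entry of `kron A B` is `A i j * B s t`. -/
def kron {K : Type*} [Mul K] {m n p q : ℕ}
    (A : Matrix (Fin m) (Fin n) K) (B : Matrix (Fin p) (Fin q) K) :
    Matrix (Fin (m * p)) (Fin (n * q)) K :=
  Matrix.reindex finProdFinEquiv finProdFinEquiv (Matrix.kroneckerMap (· * ·) A B)

/-- Cast a matrix along equalities of its dimensions. -/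
def mcast {K : Type*} {a b c d : ℕ} (h₁ : a = b) (h₂ : c = d)
    (A : Matrix (Fin a) (Fin c) K) : Matrix (Fin b) (Fin d) K :=
  Matrix.reindex (finCongr h₁) (finCongr h₂) A

/-- The `N × N` block-diagonal matrix `[[X, 0], [0, H]]` with top-left block `X` of
order `a` and bottom-right block `H` of order `N - a`. -/
def blockDiag2 (K : Type*) [Semiring K] (N : ℕ) {a : ℕ} (X : Matrix (Fin a) (Fin a) K)
    (H : Matrix (Fin (N - a)) (Fin (N - a)) K) : Matrix (Fin N) (Fin N) K :=
  Matrix.of fun i j =>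
    if hi : (i : ℕ) < a then
      (if hj : (j : ℕ) < a then X ⟨i, hi⟩ ⟨j, hj⟩ else 0)
    else if (j : ℕ) < a then 0
    else H ⟨(i : ℕ) - a, by have := i.isLt; omega⟩ ⟨(j : ℕ) - a, by have := j.isLt; omega⟩

/-!
Every matrix in the identity is a permutation matrix `permMatrixHom σ` (sending `e_b` to
`e_{σ b}`), and `kron`, `blockDiag2`, `mcast` and the matrix product all come from operations
on the permutations, so the identity reduces to one between permutations of
`Fin (2 (n + τ) m')`. Writing a column index as `d + 2 q + 2 m' v` with `d < 2`, `q < m'` and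
`v < n + τ`, both sides send it to `q + m' (v + n d)` when `v < n`, and to `q + m' (d + 2 v)`
otherwise.
-/

open Equiv

def kronPerm {m p : ℕ} (σ : Perm (Fin m)) (τ : Perm (Fin p)) : Perm (Fin (m * p)) :=
  finProdFinEquiv.permCongr (σ.prodCongr τ)

def blockPerm {N a : ℕ} (ha : a ≤ N) (σ : Perm (Fin a)) (τ : Perm (Fin (N - a))) :
    Perm (Fin N) :=
  (finSumFinEquiv.trans (finCongr (Nat.add_sub_cancel' ha))).permCongr (σ.sumCongr τ)

theorem strideEquiv_apply_val {N m n : ℕ} (h : N = m * n) {b : Fin N} {i j : ℕ} (hi : i < m)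
    (hj : j < n) (hb : (b : ℕ) = j + n * i) : (strideEquiv N m n h b : ℕ) = i + m * j := by
  have hb' : Fin.cast h b = finProdFinEquiv (⟨i, hi⟩, ⟨j, hj⟩) := Fin.ext (by simp [hb])
  simp [strideEquiv, hb']

theorem kronPerm_apply_val {m p : ℕ} (σ : Perm (Fin m)) (τ : Perm (Fin p)) {y : Fin (m * p)}
    {v t : ℕ} (hv : v < m) (ht : t < p) (hy : (y : ℕ) = t + p * v) :
    (kronPerm σ τ y : ℕ) = τ ⟨t, ht⟩ + p * σ ⟨v, hv⟩ := by
  obtain rfl : y = finProdFinEquiv (⟨v, hv⟩, ⟨t, ht⟩) := Fin.ext (by simp [hy])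
  simp [kronPerm]

theorem finCongr_permCongr_apply_val {a b : ℕ} (h : a = b) (σ : Perm (Fin a)) (x : Fin b) :
    ((finCongr h).permCongr σ x : ℕ) = σ (Fin.cast h.symm x) :=
  rfl

section BlockPerm

variable {N a : ℕ} (ha : a ≤ N) (σ : Perm (Fin a)) (τ : Perm (Fin (N - a)))

theorem blockPerm_apply_val_of_lt (x : Fin N) (hx : (x : ℕ) < a) :
    (blockPerm ha σ τ x : ℕ) = σ ⟨x, hx⟩ := by
  have hx' : (finSumFinEquiv.trans (finCongr (Nat.add_sub_cancel' ha))).symm x =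
      Sum.inl ⟨x, hx⟩ := by
    rw [Equiv.symm_apply_eq]; ext; simp
  rw [blockPerm, permCongr_apply, hx']
  simp

theorem blockPerm_apply_val_of_le (x : Fin N) (hx : a ≤ (x : ℕ)) :
    (blockPerm ha σ τ x : ℕ) = a + τ ⟨x - a, by omega⟩ := by
  have hx' : (finSumFinEquiv.trans (finCongr (Nat.add_sub_cancel' ha))).symm x =
      Sum.inr ⟨x - a, by omega⟩ := by
    rw [Equiv.symm_apply_eq]; ext; simp; omega
  rw [blockPerm, permCongr_apply, hx']
  simp

end BlockPerm

theorem blockdiag_stride_factorization_perm (n τ m' : ℕ) :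
    kronPerm (blockPerm (by omega) (strideEquiv (2 * n) n 2 (Nat.mul_comm 2 n)) 1)
        (1 : Perm (Fin m')) *
      (finCongr (show (n + τ) * (2 * m') = 2 * (n + τ) * m' by ring)).permCongr
        (kronPerm (1 : Perm (Fin (n + τ))) (strideEquiv (2 * m') m' 2 (Nat.mul_comm 2 m'))) =
    blockPerm (show n * (2 * m') ≤ 2 * (n + τ) * m' by nlinarith)
      (strideEquiv (n * (2 * m')) (n * m') 2 (by ring))
      ((finCongr (show τ * (2 * m') = 2 * (n + τ) * m' - n * (2 * m') from
          Nat.eq_sub_of_add_eq' (by ring))).permCongr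
        (kronPerm (1 : Perm (Fin τ)) (strideEquiv (2 * m') m' 2 (Nat.mul_comm 2 m')))) := by
  ext y
  have hy_lt : (y : ℕ) < 2 * m' * (n + τ) := by linarith [y.isLt]
  have hm' : 0 < 2 * m' := Nat.pos_of_ne_zero fun h => by simp [h] at hy_lt
  obtain ⟨v, hv, t, ht, hy⟩ : ∃ v < n + τ, ∃ t < 2 * m', (y : ℕ) = t + 2 * m' * v :=
    ⟨y / (2 * m'), Nat.div_lt_of_lt_mul hy_lt, y % (2 * m'), Nat.mod_lt _ hm',
      (Nat.mod_add_div _ _).symm⟩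
  obtain ⟨q, hq, d, hd, rfl⟩ : ∃ q < m', ∃ d < 2, t = d + 2 * q :=
    ⟨t / 2, by omega, t % 2, by omega, by omega⟩
  rw [Perm.mul_apply, kronPerm_apply_val _ _ (v := d + 2 * v) (by omega) hq ?column,
    Perm.one_apply]
  case column =>
    rw [finCongr_permCongr_apply_val, kronPerm_apply_val _ _ hv ht hy,
      strideEquiv_apply_val _ hq hd rfl, Perm.one_apply]
    ring
  by_cases hvn : v < n
  · rw [blockPerm_apply_val_of_lt _ _ _ _ (show d + 2 * v < 2 * n by omega),
      strideEquiv_apply_val _ hvn hd rfl,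
      blockPerm_apply_val_of_lt _ _ _ _ (by rw [hy]; nlinarith),
      strideEquiv_apply_val _ (i := q + m' * v) (by nlinarith) hd (by rw [hy]; ring)]
    ring
  · obtain ⟨w, rfl⟩ := Nat.exists_eq_add_of_le (not_lt.1 hvn)
    rw [blockPerm_apply_val_of_le _ _ _ _ (show 2 * n ≤ d + 2 * (n + w) by omega),
      blockPerm_apply_val_of_le _ _ _ _ (by rw [hy]; nlinarith), finCongr_permCongr_apply_val,
      kronPerm_apply_val _ _ (v := w) (by omega) ht (Nat.sub_eq_of_eq_add (by rw [hy]; ring)),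
      strideEquiv_apply_val _ hq hd rfl]
    simp only [Perm.one_apply, show d + 2 * (n + w) - 2 * n = d + 2 * w by omega]
    ring

section Matrices

variable {K : Type*} [Semiring K]

theorem permMatrixHom_apply_apply {N : ℕ} (σ : Perm (Fin N)) (a b : Fin N) :
    permMatrixHom (R := K) σ a b = if a = σ b then 1 else 0 := by
  simp [PEquiv.toMatrix_apply, Equiv.eq_symm_apply, eq_comm]

theorem strideMat_eq_permMatrixHom (N m n : ℕ) (h : N = m * n) :
    strideMat K N m n h = permMatrixHom (strideEquiv N m n h) := by
  ext a b
  rw [permMatrixHom_apply_apply, strideMat, of_apply]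

theorem kron_permMatrixHom {m p : ℕ} (σ : Perm (Fin m)) (τ : Perm (Fin p)) :
    kron (permMatrixHom (R := K) σ) (permMatrixHom τ) = permMatrixHom (kronPerm σ τ) := by
  ext a b
  simp only [kron, reindex_apply, submatrix_apply, kroneckerMap_apply, permMatrixHom_apply_apply,
    kronPerm, permCongr_apply, ite_zero_mul_ite_zero, one_mul]
  refine if_congr ?_ rfl rfl
  rw [← finProdFinEquiv.symm_apply_eq (x := a), Prod.ext_iff]
  rfl

theorem mcast_permMatrixHom {a b : ℕ} (h : a = b) (σ : Perm (Fin a)) :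
    mcast h h (permMatrixHom (R := K) σ) = permMatrixHom ((finCongr h).permCongr σ) := by
  ext x y
  simp only [mcast, reindex_apply, submatrix_apply, permMatrixHom_apply_apply, permCongr_apply]
  simp [Fin.ext_iff]

theorem blockDiag2_permMatrixHom {N a : ℕ} (ha : a ≤ N) (σ : Perm (Fin a))
    (τ : Perm (Fin (N - a))) :
    blockDiag2 K N (permMatrixHom σ) (permMatrixHom τ) = permMatrixHom (blockPerm ha σ τ) := by
  ext i j
  simp only [blockDiag2, of_apply, permMatrixHom_apply_apply, Fin.ext_iff]
  by_cases hj : (j : ℕ) < a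
  · rw [blockPerm_apply_val_of_lt ha σ τ j hj]
    have := (σ ⟨j, hj⟩).isLt
    split_ifs <;> first | rfl | omega
  · rw [blockPerm_apply_val_of_le ha σ τ j (by omega)]
    split_ifs <;> first | rfl | omega

end Matrices

/-- Let `n ≥ 1`, `τ ≥ 0`, `ν = n + τ`, `m' ≥ 1`, `μ = 2m'`, and let `U` be
the `2ν × 2ν` block-diagonal matrix `[[P_2^{2n}, 0], [0, I_{2τ}]]`. Then
`(U ⊗ I_{m'}) · (I_ν ⊗ P_2^μ) = [[P_2^{nμ}, 0], [0, I_τ ⊗ P_2^μ]]` (a block-diagonal matrix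
of order `μν`, with top-left block of order `nμ` and bottom-right block of order `τμ`). -/
theorem blockdiag_stride_factorization (K : Type*) [CommSemiring K] (n τ m' : ℕ) :
    kron
        (blockDiag2 K (2 * (n + τ)) (strideMat K (2 * n) n 2 (Nat.mul_comm 2 n))
          (1 : Matrix (Fin (2 * (n + τ) - 2 * n)) (Fin (2 * (n + τ) - 2 * n)) K))
        (1 : Matrix (Fin m') (Fin m') K) *
      mcast (show (n + τ) * (2 * m') = 2 * (n + τ) * m' by ring)
          (show (n + τ) * (2 * m') = 2 * (n + τ) * m' by ring)
          (kron (1 : Matrix (Fin (n + τ)) (Fin (n + τ)) K)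
            (strideMat K (2 * m') m' 2 (Nat.mul_comm 2 m'))) =
    blockDiag2 K (2 * (n + τ) * m')
      (strideMat K (n * (2 * m')) (n * m') 2 (by ring))
      (mcast
        (show τ * (2 * m') = 2 * (n + τ) * m' - n * (2 * m') from by
          have h : 2 * (n + τ) * m' = n * (2 * m') + τ * (2 * m') := by ring
          omega)
        (show τ * (2 * m') = 2 * (n + τ) * m' - n * (2 * m') from by
          have h : 2 * (n + τ) * m' = n * (2 * m') + τ * (2 * m') := by ring
          omega)
        (kron (1 : Matrix (Fin τ) (Fin τ) K)
          (strideMat K (2 * m') m' 2 (Nat.mul_comm 2 m')))) := by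
  have one_eq (k : ℕ) : (1 : Matrix (Fin k) (Fin k) K) = permMatrixHom 1 := (map_one _).symm
  simp only [one_eq, strideMat_eq_permMatrixHom, kron_permMatrixHom, mcast_permMatrixHom]
  rw [blockDiag2_permMatrixHom (by omega), blockDiag2_permMatrixHom (by nlinarith),
    kron_permMatrixHom, ← map_mul, blockdiag_stride_factorization_perm]
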